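/- Let D be a k-minimal digraph of order n with a balanced acyclic complete k-coloring (all color classes of size q, so qk = n). If the complete symmetric digraph K_m admits a relabel factorization into q factors, all isomorphic to a digraph H, then the lexicographic product D[H] is km-minimal and admits a balanced km-coloring. -/

import Mathlib

/-- A set of vertices is acyclic in a digraph if the induced subdigraph
contains no directed cycle (no vertex reaches itself through the set). -/
def Digraph.AcyclicOn {V : Type*} (D : Digraph V) (S : Set V) : Prop :=
  ¬ ∃ v, Relation.TransGen (fun a b => a ∈ S ∧ b ∈ S ∧ D.Adj a b) v v

/-- A `k`-coloring is acyclic if every color class induces an acyclic subdigraph. -/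
def Digraph.IsAcyclicColoring {V : Type*} {k : ℕ} (D : Digraph V) (c : V → Fin k) : Prop :=
  ∀ i : Fin k, D.AcyclicOn {v | c v = i}

/-- A `k`-coloring is complete if for every ordered pair of distinct colors
there is at least one arc from the first color to the second. -/
def Digraph.IsCompleteColoring {V : Type*} {k : ℕ} (D : Digraph V) (c : V → Fin k) : Prop :=
  ∀ i j : Fin k, i ≠ j → ∃ u v, D.Adj u v ∧ c u = i ∧ c v = j

/-- A coloring is proper if no arc joins two vertices of the same color. -/
def Digraph.IsProperColoring {V : Type*} {k : ℕ} (D : Digraph V) (c : V → Fin k) : Prop :=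
  ∀ u v, D.Adj u v → c u ≠ c v

/-- A coloring is harmonious if it is proper and for every ordered pair of
distinct colors there is at most one arc from the first color to the second. -/
def Digraph.IsHarmoniousColoring {V : Type*} {k : ℕ} (D : Digraph V) (c : V → Fin k) : Prop :=
  D.IsProperColoring c ∧
    ∀ u v u' v', D.Adj u v → D.Adj u' v' → c u = c u' → c v = c v' → c u ≠ c v →
      u = u' ∧ v = v'

/-- A coloring is balanced if all color classes have the same cardinality. -/
def IsBalancedColoring {V : Type*} {k : ℕ} (c : V → Fin k) : Prop :=
  ∀ i j : Fin k, Nat.card {v // c v = i} = Nat.card {v // c v = j}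

/-- The dichromatic number: the least `k` admitting an acyclic `k`-coloring. -/
noncomputable def Digraph.dichromaticNumber {V : Type*} (D : Digraph V) : ℕ :=
  sInf {k | ∃ c : V → Fin k, D.IsAcyclicColoring c}

/-- The diachromatic number: the greatest `k` admitting an acyclic complete `k`-coloring. -/
noncomputable def Digraph.diachromaticNumber {V : Type*} (D : Digraph V) : ℕ :=
  sSup {k | ∃ c : V → Fin k, D.IsAcyclicColoring c ∧ D.IsCompleteColoring c}

/-- The harmonious chromatic number: the least `k` admitting a harmonious `k`-coloring. -/
noncomputable def Digraph.harmoniousNumber {V : Type*} (D : Digraph V) : ℕ :=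
  sInf {k | ∃ c : V → Fin k, D.IsHarmoniousColoring c}

/-- The number of arcs (the size) of a digraph. -/
noncomputable def Digraph.arcCount {V : Type*} (D : Digraph V) : ℕ :=
  Nat.card {p : V × V // D.Adj p.1 p.2}

/-- Deletion of the arc `(u, v)` from a digraph. -/
def Digraph.deleteArc {V : Type*} (D : Digraph V) (u v : V) : Digraph V :=
  ⟨fun a b => D.Adj a b ∧ ¬(a = u ∧ b = v)⟩

/-- A digraph is `k`-minimal if its diachromatic number is `k` and deleting
any arc decreases the diachromatic number below `k`. -/
def Digraph.IsKMinimal {V : Type*} (D : Digraph V) (k : ℕ) : Prop :=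
  D.diachromaticNumber = k ∧
    ∀ u v, D.Adj u v → (D.deleteArc u v).diachromaticNumber < k

/-- The complete symmetric digraph on a vertex type. -/
def completeDigraph (V : Type*) : Digraph V := ⟨fun a b => a ≠ b⟩

/-- The directed cycle on `m` vertices. -/
def dirCycle (m : ℕ) : Digraph (ZMod m) := ⟨fun a b => b = a + 1⟩

/-- The lexicographic product of digraphs. -/
def lexProd {V W : Type*} (D : Digraph V) (H : Digraph W) : Digraph (V × W) :=
  ⟨fun x y => D.Adj x.1 y.1 ∨ (x.1 = y.1 ∧ H.Adj x.2 y.2)⟩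

/-- Vertex type of the `i`-fold iterated lexicographic product. -/
def iterType (V W : Type u) : ℕ → Type u
  | 0 => V
  | i + 1 => iterType V W i × W

/-- The iterated lexicographic product `D[H]^i` (with `D[H]^0 = D`). -/
def iterLex {V W : Type u} (D : Digraph V) (H : Digraph W) : (i : ℕ) → Digraph (iterType V W i)
  | 0 => D
  | i + 1 => lexProd (iterLex D H i) H

/-- The Zykov sum of the family `H` of mutually vertex-disjoint digraphs over `D`. -/
def zykovSum {V : Type*} {W : V → Type*} (D : Digraph V) (H : ∀ u, Digraph (W u)) :
    Digraph (Σ u, W u) :=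
  ⟨fun x y => D.Adj x.1 y.1 ∨ ∃ h : x.1 = y.1, (H y.1).Adj (h ▸ x.2) y.2⟩


section Helpers

lemma card_ne_pairs' (K : ℕ) : Nat.card {p : Fin K × Fin K // p.1 ≠ p.2} = K * (K - 1) := by
  classical
  have h1 : Nat.card {p : Fin K × Fin K // p.1 = p.2} = K := by
    have := Nat.card_eq_of_bijective (fun p : {p : Fin K × Fin K // p.1 = p.2} => p.1.1)
      ⟨by rintro ⟨⟨a,b⟩,h⟩ ⟨⟨a',b'⟩,h'⟩ hh; simp only at h h' hh; subst h; subst h'; subst hh; rfl,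
       fun i => ⟨⟨(i,i), rfl⟩, rfl⟩⟩
    simpa using this
  have h2 : Nat.card {p : Fin K × Fin K // p.1 = p.2} +
      Nat.card {p : Fin K × Fin K // p.1 ≠ p.2} = K * K := by
    rw [← Nat.card_sum]
    rw [Nat.card_eq_of_bijective _ (Equiv.sumCompl (fun p : Fin K × Fin K => p.1 = p.2)).bijective]
    simp
  have h3 : K * (K - 1) = K * K - K := by
    cases K with
    | zero => simp
    | succ n => rw [Nat.mul_sub]; simp
  omega

lemma complete_le_arcCount' {X : Type*} [Finite X] (G : Digraph X) {K : ℕ} (c : X → Fin K)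
    (h : G.IsCompleteColoring c) : K * (K - 1) ≤ G.arcCount := by
  rw [← card_ne_pairs' K]
  have : ∀ p : {p : Fin K × Fin K // p.1 ≠ p.2},
      ∃ uv : {p : X × X // G.Adj p.1 p.2}, c uv.1.1 = p.1.1 ∧ c uv.1.2 = p.1.2 := by
    rintro ⟨⟨i,j⟩,hij⟩
    obtain ⟨u, v, ha, hu, hv⟩ := h i j hij
    exact ⟨⟨(u,v), ha⟩, hu, hv⟩
  choose f hf1 hf2 using this
  exact Nat.card_le_card_of_injective f (by
    rintro p p' hpp'
    ext
    · rw [← hf1 p, ← hf1 p', hpp']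
    · rw [← hf2 p, ← hf2 p', hpp'])

lemma mul_pred_mono' {a b : ℕ} (h : a ≤ b) : a * (a-1) ≤ b * (b-1) :=
  Nat.mul_le_mul h (Nat.sub_le_sub_right h 1)

lemma le_of_mul_pred_le' {K B : ℕ} (hB : 1 ≤ B) (h : K*(K-1) ≤ B*(B-1)) : K ≤ B := by
  by_contra hc
  push_neg at hc
  have h1 : (B+1) * B ≤ K * (K-1) := by
    have := mul_pred_mono' hc
    simpa using this
  have h3 : B*(B-1) ≤ B*B := Nat.mul_le_mul_left _ (by omega)
  have h4 : B*B < (B+1)*B := Nat.mul_lt_mul_of_lt_of_le (by omega) (le_refl B) (by omega)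
  linarith

lemma bddAbove_colorSet' {X : Type*} [Finite X] (G : Digraph X) :
    BddAbove {K | ∃ c : X → Fin K, G.IsAcyclicColoring c ∧ G.IsCompleteColoring c} := by
  refine ⟨G.arcCount + 1, ?_⟩
  rintro K ⟨c, _, hc⟩
  have h1 := complete_le_arcCount' G c hc
  rcases Nat.eq_zero_or_pos K with h | h
  · omega
  · have h2 : 1 * (K - 1) ≤ K * (K-1) := Nat.mul_le_mul_right _ h
    simp only [one_mul] at h2
    omega

lemma diachromatic_ge' {X : Type*} [Finite X] (G : Digraph X) {K : ℕ} {c : X → Fin K}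
    (h1 : G.IsAcyclicColoring c) (h2 : G.IsCompleteColoring c) : K ≤ G.diachromaticNumber :=
  le_csSup (bddAbove_colorSet' G) ⟨c, h1, h2⟩

lemma diachromatic_le' {X : Type*} [Finite X] (G : Digraph X) {B : ℕ} (hB : 1 ≤ B)
    (hA : G.arcCount ≤ B*(B-1)) : G.diachromaticNumber ≤ B := by
  by_cases hne : {K | ∃ c : X → Fin K, G.IsAcyclicColoring c ∧ G.IsCompleteColoring c}.Nonempty
  · exact csSup_le hne (fun K hK => le_of_mul_pred_le' hB
      ((complete_le_arcCount' G hK.choose hK.choose_spec.2).trans hA))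
  · rw [Set.not_nonempty_iff_eq_empty] at hne
    unfold Digraph.diachromaticNumber
    rw [hne, csSup_empty]
    exact Nat.zero_le B

lemma diachromatic_lt' {X : Type*} [Finite X] (G : Digraph X) {B : ℕ} (hB : 1 ≤ B)
    (hA : G.arcCount < B*(B-1)) : G.diachromaticNumber < B := by
  by_cases hne : {K | ∃ c : X → Fin K, G.IsAcyclicColoring c ∧ G.IsCompleteColoring c}.Nonempty
  · have : sSup {K | ∃ c : X → Fin K, G.IsAcyclicColoring c ∧ G.IsCompleteColoring c} ≤ B - 1 := by
      refine csSup_le hne (fun K hK => ?_)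
      have h1 := (complete_le_arcCount' G hK.choose hK.choose_spec.2).trans_lt hA
      have h2 : K ≤ B := le_of_mul_pred_le' hB h1.le
      rcases Nat.lt_or_ge K B with h | h
      · omega
      · exact absurd (mul_pred_mono' (le_antisymm h2 h).ge) (by omega)
    calc G.diachromaticNumber ≤ B - 1 := this
    _ < B := by omega
  · rw [Set.not_nonempty_iff_eq_empty] at hne
    unfold Digraph.diachromaticNumber
    rw [hne, csSup_empty, Nat.bot_eq_zero]
    omega

lemma arcCount_deleteArc_lt' {X : Type*} [Finite X] (G : Digraph X) {u v : X} (h : G.Adj u v) :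
    (G.deleteArc u v).arcCount < G.arcCount := by
  have e1 : (G.deleteArc u v).arcCount = Set.ncard {p : X × X | (G.deleteArc u v).Adj p.1 p.2} :=
    Nat.card_coe_set_eq _
  have e2 : G.arcCount = Set.ncard {p : X × X | G.Adj p.1 p.2} := Nat.card_coe_set_eq _
  rw [e1, e2]
  refine Set.ncard_lt_ncard ⟨fun p hp => hp.1, fun hsub => ?_⟩ (Set.toFinite _)
  have := hsub (show G.Adj (u,v).1 (u,v).2 from h)
  exact this.2 ⟨rfl, rfl⟩

lemma arcCount_lexProd' {V W : Type*} [Finite V] [Finite W] (D : Digraph V) (H : Digraph W)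
    (hnl : ∀ x, ¬ D.Adj x x) :
    (lexProd D H).arcCount = D.arcCount * (Nat.card W * Nat.card W) + Nat.card V * H.arcCount := by
  classical
  have key : Nat.card (({p : V × V // D.Adj p.1 p.2} × (W × W)) ⊕
      (V × {p : W × W // H.Adj p.1 p.2})) = (lexProd D H).arcCount := by
    refine Nat.card_eq_of_bijective (fun x => match x with
      | Sum.inl (⟨(a, b), hab⟩, (w, w')) => ⟨((a, w), (b, w')), Or.inl hab⟩
      | Sum.inr (a, ⟨(w, w'), hw⟩) => ⟨((a, w), (a, w')), Or.inr ⟨rfl, hw⟩⟩) ⟨?_, ?_⟩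
    · rintro (⟨⟨⟨a,b⟩,hab⟩,⟨w,w'⟩⟩ | ⟨a,⟨⟨w,w'⟩,hw⟩⟩) (⟨⟨⟨a₂,b₂⟩,hab₂⟩,⟨w₂,w₂'⟩⟩ | ⟨a₂,⟨⟨w₂,w₂'⟩,hw₂⟩⟩) hh <;>
        replace hh := Subtype.mk.inj hh <;>
        simp only [Subtype.mk.injEq, Prod.mk.injEq] at hh
      · obtain ⟨⟨h1, h2⟩, h3, h4⟩ := hh; subst h1; subst h2; subst h3; subst h4; rfl
      · obtain ⟨⟨h1, h2⟩, h3, h4⟩ := hh; subst h1; subst h3; exact absurd hab (hnl _)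
      · obtain ⟨⟨h1, h2⟩, h3, h4⟩ := hh; subst h1; subst h3; exact absurd hab₂ (hnl _)
      · obtain ⟨⟨h1, h2⟩, h3, h4⟩ := hh; subst h1; subst h2; subst h4; rfl
    · rintro ⟨⟨⟨a, w⟩, ⟨b, w'⟩⟩, (hD | ⟨heq, hH⟩)⟩
      · exact ⟨Sum.inl (⟨(a, b), hD⟩, (w, w')), rfl⟩
      · simp only at heq
        subst heq
        exact ⟨Sum.inr (a, ⟨(w, w'), hH⟩), rfl⟩
  rw [← key, Nat.card_sum, Nat.card_prod, Nat.card_prod, Nat.card_prod]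
  rfl

lemma arcCount_H' {W : Type*} [Finite W] (H : Digraph W) (q m : ℕ)
    (F : Fin q → Digraph (Fin m))
    (hloop : ∀ j a, ¬ (F j).Adj a a)
    (hpart : ∀ a b : Fin m, a ≠ b → ∃! j : Fin q, (F j).Adj a b)
    (hiso : ∀ j, ∃ e : Fin m ≃ W, ∀ a b, (F j).Adj a b ↔ H.Adj (e a) (e b)) :
    q * H.arcCount = m * (m - 1) := by
  classical
  have hFj : ∀ j, Nat.card {p : Fin m × Fin m // (F j).Adj p.1 p.2} = H.arcCount := by
    intro j
    obtain ⟨e, he⟩ := hiso j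
    refine Nat.card_eq_of_bijective (fun p => ⟨(e p.1.1, e p.1.2), (he _ _).mp p.2⟩) ⟨?_, ?_⟩
    · rintro ⟨⟨a,b⟩,h⟩ ⟨⟨a',b'⟩,h'⟩ hh
      simp only [Subtype.mk.injEq, Prod.mk.injEq, EmbeddingLike.apply_eq_iff_eq] at hh
      simp [hh.1, hh.2]
    · rintro ⟨⟨w,w'⟩,h⟩
      refine ⟨⟨(e.symm w, e.symm w'), ?_⟩, by simp⟩
      rw [he]; simpa using h
  have key : Nat.card (Σ j : Fin q, {p : Fin m × Fin m // (F j).Adj p.1 p.2}) =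
      Nat.card {p : Fin m × Fin m // p.1 ≠ p.2} := by
    refine Nat.card_eq_of_bijective
      (fun x => ⟨x.2.1, fun h => hloop x.1 x.2.1.1 (by have := x.2.2; rwa [← h] at this)⟩)
      ⟨?_, ?_⟩
    · rintro ⟨j, ⟨⟨a,b⟩,h⟩⟩ ⟨j', ⟨⟨a',b'⟩,h'⟩⟩ hh
      simp only [Subtype.mk.injEq, Prod.mk.injEq] at hh
      obtain ⟨h1, h2⟩ := hh
      subst h1; subst h2
      have hab : a ≠ b := fun e => hloop j a (by rwa [← e] at h)
      obtain ⟨j0, -, huniq⟩ := hpart a b hab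
      have hjj : j = j' := (huniq j h).trans (huniq j' h').symm
      subst hjj
      rfl
    · rintro ⟨⟨a,b⟩,hab⟩
      obtain ⟨j, hj, -⟩ := hpart a b hab
      exact ⟨⟨j, ⟨(a,b), hj⟩⟩, rfl⟩
  have hsum : Nat.card (Σ j : Fin q, {p : Fin m × Fin m // (F j).Adj p.1 p.2}) =
      q * H.arcCount := by
    haveI : ∀ j, Fintype {p : Fin m × Fin m // (F j).Adj p.1 p.2} := fun j => Fintype.ofFinite _
    rw [Nat.card_eq_fintype_card, Fintype.card_sigma]
    simp only [← Nat.card_eq_fintype_card, hFj]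
    simp [mul_comm]
  rw [← hsum, key, card_ne_pairs']

lemma minimal_structure' {V : Type*} [Finite V] (D : Digraph V) {k : ℕ} (hmin : D.IsKMinimal k)
    (c : V → Fin k) (hac : D.IsAcyclicColoring c) (hcomp : D.IsCompleteColoring c) :
    (∀ u v, D.Adj u v → c u ≠ c v) ∧
    ∀ u v u' v', D.Adj u v → D.Adj u' v' → c u = c u' → c v = c v' → u = u' ∧ v = v' := by
  have hacDel : ∀ u v, (D.deleteArc u v).IsAcyclicColoring c := by
    intro u v i hcyc
    obtain ⟨x, hx⟩ := hcyc
    exact hac i ⟨x, Relation.TransGen.mono (fun a b h => ⟨h.1, h.2.1, h.2.2.1⟩) _ _ hx⟩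
  constructor
  · intro u v huv hcc
    refine absurd (diachromatic_ge' (D.deleteArc u v) (hacDel u v) ?_)
      (by have := hmin.2 u v huv; omega)
    intro i j hij
    obtain ⟨a, b, hab, ha, hb⟩ := hcomp i j hij
    refine ⟨a, b, ⟨hab, ?_⟩, ha, hb⟩
    rintro ⟨rfl, rfl⟩
    exact hij (by rw [← ha, ← hb, hcc])
  · intro u v u' v' huv hu'v' hcu hcv
    by_contra hne
    refine absurd (diachromatic_ge' (D.deleteArc u v) (hacDel u v) ?_)
      (by have := hmin.2 u v huv; omega)
    intro i j hij
    obtain ⟨a, b, hab, ha, hb⟩ := hcomp i j hij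
    by_cases hcase : a = u ∧ b = v
    · obtain ⟨rfl, rfl⟩ := hcase
      refine ⟨u', v', ⟨hu'v', ?_⟩, by rw [← hcu]; exact ha, by rw [← hcv]; exact hb⟩
      rintro ⟨rfl, rfl⟩
      exact hne ⟨rfl, rfl⟩
    · exact ⟨a, b, ⟨hab, hcase⟩, ha, hb⟩

lemma arcCount_of_minimal' {V : Type*} [Finite V] (D : Digraph V) {k : ℕ} (hmin : D.IsKMinimal k)
    (c : V → Fin k) (hac : D.IsAcyclicColoring c) (hcomp : D.IsCompleteColoring c) :
    D.arcCount = k * (k - 1) := by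
  obtain ⟨h1, h2⟩ := minimal_structure' D hmin c hac hcomp
  rw [← card_ne_pairs' k]
  refine Nat.card_eq_of_bijective (fun p => ⟨(c p.1.1, c p.1.2), h1 _ _ p.2⟩) ⟨?_, ?_⟩
  · rintro ⟨⟨u,v⟩,h⟩ ⟨⟨u',v'⟩,h'⟩ hh
    simp only [Subtype.mk.injEq, Prod.mk.injEq] at hh
    obtain ⟨e1, e2⟩ := h2 u v u' v' h h' hh.1 hh.2
    subst e1; subst e2; rfl
  · rintro ⟨⟨i,j⟩,hij⟩
    obtain ⟨u, v, huv, hu, hv⟩ := hcomp i j hij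
    exact ⟨⟨(u,v), huv⟩, by simp [hu, hv]⟩

end Helpers

/-- if `D` is `k`-minimal of order `n` with a balanced acyclic complete
`k`-coloring (classes of size `q`, `qk = n`), and `K_m` admits a relabel `H`-factorization
into `q` factors, then the lexicographic product `D[H]` is `km`-minimal and admits a
balanced `km`-coloring. -/
theorem stmt4 {V W : Type} [Fintype V] [Fintype W] (D : Digraph V) (H : Digraph W)
    (k q n m : ℕ) (hm : 2 ≤ m) (hn : Nat.card V = n) (hqk : q * k = n)
    (hmin : D.IsKMinimal k)
    (c : V → Fin k) (hac : D.IsAcyclicColoring c) (hcomp : D.IsCompleteColoring c)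
    (hbal : ∀ i : Fin k, Nat.card {v // c v = i} = q)
    (F : Fin q → Digraph (Fin m))
    (hloop : ∀ j a, ¬ (F j).Adj a a)
    (hpart : ∀ a b : Fin m, a ≠ b → ∃! j : Fin q, (F j).Adj a b)
    (hiso : ∀ j, ∃ e : Fin m ≃ W, ∀ a b, (F j).Adj a b ↔ H.Adj (e a) (e b)) :
    (lexProd D H).IsKMinimal (k * m) ∧
      ∃ c' : V × W → Fin (k * m), (lexProd D H).IsAcyclicColoring c' ∧
        (lexProd D H).IsCompleteColoring c' ∧ IsBalancedColoring c' := by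
  classical
  -- q is positive
  have hq : 0 < q := by
    have h01 : (⟨0, by omega⟩ : Fin m) ≠ ⟨1, by omega⟩ := by simp [Fin.ext_iff]
    obtain ⟨j, -, -⟩ := hpart _ _ h01
    exact j.pos
  -- k is positive
  have hk : 0 < k := by
    rcases Nat.eq_zero_or_pos k with hk0 | h
    · exfalso
      subst hk0
      haveI : IsEmpty V := ⟨fun v => (c v).elim0⟩
      have h1 : D.IsAcyclicColoring (fun _ => (0 : Fin 1)) := by
        rintro i ⟨v, -⟩; exact IsEmpty.false v
      have h2 : D.IsCompleteColoring (fun _ => (0 : Fin 1)) := by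
        intro i j hij; exact absurd (Subsingleton.elim i j) hij
      have h3 := diachromatic_ge' D h1 h2
      have h4 := hmin.1
      omega
    · exact h
  obtain ⟨hstr1, hstr2⟩ := minimal_structure' D hmin c hac hcomp
  have Dloop : ∀ x, ¬ D.Adj x x := fun x h => hstr1 x x h rfl
  have arcD : D.arcCount = k * (k-1) := arcCount_of_minimal' D hmin c hac hcomp
  choose e he using hiso
  have cardW : Nat.card W = m := by
    rw [Nat.card_congr (e ⟨0, hq⟩).symm, Nat.card_eq_fintype_card, Fintype.card_fin]
  have Hloop : ∀ w, ¬ H.Adj w w := by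
    intro w hw
    exact hloop ⟨0, hq⟩ _ ((he ⟨0, hq⟩ ((e ⟨0, hq⟩).symm w) ((e ⟨0, hq⟩).symm w)).mpr
      (by simpa using hw))
  have cardV : Nat.card V = q * k := by rw [hn, ← hqk]
  have arcH : q * H.arcCount = m * (m-1) := arcCount_H' H q m F hloop hpart (fun j => ⟨e j, he j⟩)
  have km1 : 1 ≤ k * m := Nat.mul_pos hk (by omega)
  have arcLex : (lexProd D H).arcCount = (k*m) * ((k*m) - 1) := by
    rw [arcCount_lexProd' D H Dloop, arcD, cardW, cardV,
      show q * k * H.arcCount = k * (q * H.arcCount) by ring, arcH]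
    obtain ⟨a, rfl⟩ : ∃ a, k = a + 1 := ⟨k-1, by omega⟩
    obtain ⟨b, rfl⟩ : ∃ b, m = b + 1 := ⟨m-1, by omega⟩
    simp only [Nat.add_sub_cancel]
    rw [show (a+1)*(b+1) = a*b+a+b+1 by ring, Nat.add_sub_cancel]
    ring
  -- construction of the coloring
  have E : ∀ i : Fin k, {v // c v = i} ≃ Fin q := fun i =>
    Fintype.equivFinOfCardEq (by rw [← Nat.card_eq_fintype_card]; exact hbal i)
  let t : V → Fin q := fun v => E (c v) ⟨v, rfl⟩
  have hT : ∀ (v : V) (i : Fin k) (h : c v = i), t v = E i ⟨v, h⟩ := by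
    intro v i h
    subst h
    rfl
  let c' : V × W → Fin (k*m) := fun p => finProdFinEquiv (c p.1, (e (t p.1)).symm p.2)
  have hkey : ∀ (p : V × W) (i : Fin k) (a : Fin m),
      c' p = finProdFinEquiv (i, a) ↔ c p.1 = i ∧ (e (t p.1)).symm p.2 = a := by
    intro p i a
    simp [c', Equiv.apply_eq_iff_eq, Prod.ext_iff]
  -- acyclicity
  have hac' : (lexProd D H).IsAcyclicColoring c' := by
    intro col
    obtain ⟨⟨i, a⟩, rfl⟩ := finProdFinEquiv.surjective col
    rintro ⟨⟨v, w⟩, hcyc⟩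
    refine hac i ⟨v, Relation.TransGen.lift Prod.fst ?_ _ _ hcyc⟩
    rintro ⟨x, wx⟩ ⟨y, wy⟩ ⟨hx, hy, hadj⟩
    have hx' := (hkey (x, wx) i a).mp hx
    have hy' := (hkey (y, wy) i a).mp hy
    refine ⟨hx'.1, hy'.1, ?_⟩
    rcases hadj with h | ⟨heq, hH⟩
    · exact h
    · exfalso
      simp only at heq
      subst heq
      have hww : wx = wy := (e (t x)).symm.injective (hx'.2.trans hy'.2.symm)
      subst hww
      exact Hloop wx hH
  -- completeness
  have hcomp' : (lexProd D H).IsCompleteColoring c' := by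
    intro col₁ col₂ hne
    obtain ⟨⟨i, a⟩, rfl⟩ := finProdFinEquiv.surjective col₁
    obtain ⟨⟨j, b⟩, rfl⟩ := finProdFinEquiv.surjective col₂
    by_cases hij : i = j
    · subst hij
      have hab : a ≠ b := fun h => hne (by rw [h])
      obtain ⟨t₀, ht₀, -⟩ := hpart a b hab
      have htv : t ((E i).symm t₀).val = t₀ := by
        rw [hT ((E i).symm t₀).val i ((E i).symm t₀).2]
        exact (E i).apply_symm_apply t₀
      refine ⟨(((E i).symm t₀).val, e t₀ a), (((E i).symm t₀).val, e t₀ b),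
        Or.inr ⟨rfl, (he t₀ a b).mp ht₀⟩, ?_, ?_⟩
      · rw [hkey]; exact ⟨((E i).symm t₀).2, by rw [htv]; simp⟩
      · rw [hkey]; exact ⟨((E i).symm t₀).2, by rw [htv]; simp⟩
    · obtain ⟨u, v, huv, hu, hv⟩ := hcomp i j hij
      refine ⟨(u, e (t u) a), (v, e (t v) b), Or.inl huv, ?_, ?_⟩
      · rw [hkey]; exact ⟨hu, by simp⟩
      · rw [hkey]; exact ⟨hv, by simp⟩
  -- balancedness
  have hbal' : ∀ ip : Fin k × Fin m,
      Nat.card {p : V × W // c' p = finProdFinEquiv ip} = q := by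
    rintro ⟨i, a⟩
    rw [← hbal i]
    have mem : ∀ s : {v // c v = i}, c' (s.val, e (t s.val) a) = finProdFinEquiv (i, a) :=
      fun s => (hkey _ i a).mpr ⟨s.2, by simp⟩
    refine (Nat.card_eq_of_bijective
      (fun s : {v // c v = i} => ⟨(s.val, e (t s.val) a), mem s⟩) ⟨?_, ?_⟩).symm
    · rintro ⟨v, hv⟩ ⟨v', hv'⟩ hh
      simp only [Subtype.mk.injEq, Prod.mk.injEq] at hh
      exact Subtype.ext hh.1
    · rintro ⟨⟨v, w⟩, h⟩
      obtain ⟨h1, h2⟩ := (hkey (v, w) i a).mp h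
      refine ⟨⟨v, h1⟩, Subtype.ext ?_⟩
      show (v, e (t v) a) = (v, w)
      rw [← h2]
      simp
  have hd : (lexProd D H).diachromaticNumber = k * m :=
    le_antisymm (diachromatic_le' _ km1 (le_of_eq arcLex)) (diachromatic_ge' _ hac' hcomp')
  refine ⟨⟨hd, ?_⟩, c', hac', hcomp', ?_⟩
  · intro x y hxy
    refine diachromatic_lt' _ km1 ?_
    rw [← arcLex]
    exact arcCount_deleteArc_lt' _ hxy
  · intro col col'
    obtain ⟨p1, rfl⟩ := finProdFinEquiv.surjective col
    obtain ⟨p2, rfl⟩ := finProdFinEquiv.surjective col'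
    rw [hbal' p1, hbal' p2]
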